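/- arXiv:2003.02934 — 6 statements merged into one kernel-verified Lean document; each statement's English description precedes it below -/
import Mathlib

section
/- Let $P(\lambda) = \begin{bmatrix} A(\lambda) & B(\lambda) \\ -C(\lambda) & D(\lambda) \end{bmatrix}$ be a polynomial system matrix with nonsingular state matrix $A(\lambda)\in\mathbb{F}[\lambda]^{n\times n}$ and transfer function $R(\lambda)$. Then the map $T_\ell : \mathcal{N}_\ell(R) \to \mathcal{N}_\ell(P)$ sending $y(\lambda)^T$ to $y(\lambda)^T \begin{bmatrix} C(\lambda)A(\lambda)^{-1} & I_p \end{bmatrix}$ is a well-defined bijective linear map between the left nullspace of $R(\lambda)$ and the left nullspace of $P(\lambda)$, both over $\mathbb{F}(\lambda)$. -/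
/-!
A row vector `[x y]` lies in the left kernel of `[A B; -C D]` iff `x A = y C` and
`x B + y D = 0`. Since `A` is invertible, the first equation says exactly `x = y C A⁻¹`, and
substituting this into the second turns it into `y (D + C A⁻¹ B) = 0`. So `y ↦ [y C A⁻¹  y]` is a
bijection between the two left kernels, with inverse `[x y] ↦ y`.
-/

open Matrix Polynomial

set_option synthInstance.maxHeartbeats 1000000
set_option maxHeartbeats 1000000

/-- The map sending a polynomial matrix to the corresponding matrix of rational functions. -/
noncomputable def ratMat {F : Type*} [Field F] {α β : Type*}
    (M : Matrix α β (Polynomial F)) : Matrix α β (RatFunc F) :=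
  M.map (algebraMap (Polynomial F) (RatFunc F))

theorem Sum.elim_smul_smul {α β γ R : Type*} [SMul R γ] (c : R) (f : α → γ) (g : β → γ) :
    Sum.elim (c • f) (c • g) = c • Sum.elim f g := by
  ext (i | i) <;> rfl

namespace Matrix

section Graph

variable {R : Type*} [Semiring R] {n p : Type*} [Fintype p]

theorem sumElim_vecMul_smul (M : Matrix p n R) (c : R) (y : p → R) :
    Sum.elim ((c • y) ᵥ* M) (c • y) = c • Sum.elim (y ᵥ* M) y := by
  rw [smul_vecMul, Sum.elim_smul_smul]

theorem sumElim_vecMul_add (M : Matrix p n R) (y z : p → R) :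
    Sum.elim ((y + z) ᵥ* M) (y + z) = Sum.elim (y ᵥ* M) y + Sum.elim (z ᵥ* M) z := by
  rw [add_vecMul, Sum.elim_add_add]

end Graph

section SystemMatrix

variable {K : Type*} [CommRing K] {n m p : Type*} [Fintype n] [DecidableEq n] [Fintype p]
  {A : Matrix n n K} (B : Matrix n m K) (C : Matrix p n K) (D : Matrix p m K)

theorem vecMul_eq_iff_eq_vecMul_nonsing_inv (hA : IsUnit A.det) (x w : n → K) :
    x ᵥ* A = w ↔ x = w ᵥ* A⁻¹ := by
  constructor
  · rintro rfl
    rw [vecMul_vecMul, mul_nonsing_inv A hA, vecMul_one]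
  · rintro rfl
    rw [vecMul_vecMul, nonsing_inv_mul A hA, vecMul_one]

theorem sumElim_vecMul_fromBlocks_eq_zero_iff (hA : IsUnit A.det) (x : n → K) (y : p → K) :
    Sum.elim x y ᵥ* fromBlocks A B (-C) D = 0 ↔
      x = y ᵥ* (C * A⁻¹) ∧ y ᵥ* (D + C * A⁻¹ * B) = 0 := by
  have hx : x ᵥ* A + y ᵥ* (-C) = 0 ↔ x = y ᵥ* (C * A⁻¹) := by
    rw [vecMul_neg, add_neg_eq_zero, vecMul_eq_iff_eq_vecMul_nonsing_inv hA, vecMul_vecMul]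
  rw [vecMul_fromBlocks, Sum.elim_comp_inl, Sum.elim_comp_inr, ← Sum.elim_zero_zero,
    Sum.elim_eq_iff, hx]
  refine and_congr_right fun hxy => ?_
  rw [hxy, vecMul_vecMul, vecMul_add, add_comm]

theorem bijOn_sumElim_vecMul_leftKernel (hA : IsUnit A.det) :
    Set.BijOn (fun y : p → K => Sum.elim (y ᵥ* (C * A⁻¹)) y)
      {y | y ᵥ* (D + C * A⁻¹ * B) = 0} {v | v ᵥ* fromBlocks A B (-C) D = 0} := by
  refine ⟨fun y hy => ?_, ?_, fun v hv => ?_⟩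
  · exact (sumElim_vecMul_fromBlocks_eq_zero_iff B C D hA _ y).2 ⟨rfl, hy⟩
  · exact (Function.LeftInverse.injective (g := (· ∘ Sum.inr))
      fun y => Sum.elim_comp_inr _ y).injOn
  · obtain ⟨hx, hy⟩ := (sumElim_vecMul_fromBlocks_eq_zero_iff B C D hA _ _).1
      (by rwa [Sum.elim_comp_inl_inr])
    refine ⟨v ∘ Sum.inr, hy, ?_⟩
    simp only [← hx, Sum.elim_comp_inl_inr]

end SystemMatrix

end Matrix

/-- The map `T_ℓ : y(λ)ᵀ ↦ y(λ)ᵀ [C(λ)A(λ)⁻¹  I_p]` is a well-defined bijective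
`F(λ)`-linear map from the left nullspace of the transfer function
`R = D + C A⁻¹ B` onto the left nullspace of the polynomial system matrix
`P = [A B; -C D]`. -/
theorem leftNullspace_bijection {F : Type*} [Field F] {n m p : ℕ}
    (A : Matrix (Fin n) (Fin n) (Polynomial F))
    (B : Matrix (Fin n) (Fin m) (Polynomial F))
    (C : Matrix (Fin p) (Fin n) (Polynomial F))
    (D : Matrix (Fin p) (Fin m) (Polynomial F))
    (hA : IsUnit (ratMat A).det) :
    (∀ (c : RatFunc F) (y : Fin p → RatFunc F),
        (Sum.elim (Matrix.vecMul (c • y) (ratMat C * (ratMat A)⁻¹)) (c • y) :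
            Fin n ⊕ Fin p → RatFunc F)
          = c • Sum.elim (Matrix.vecMul y (ratMat C * (ratMat A)⁻¹)) y) ∧
    (∀ (y z : Fin p → RatFunc F),
        (Sum.elim (Matrix.vecMul (y + z) (ratMat C * (ratMat A)⁻¹)) (y + z) :
            Fin n ⊕ Fin p → RatFunc F)
          = Sum.elim (Matrix.vecMul y (ratMat C * (ratMat A)⁻¹)) y
            + Sum.elim (Matrix.vecMul z (ratMat C * (ratMat A)⁻¹)) z) ∧
    Set.BijOn
      (fun y : Fin p → RatFunc F =>
        Sum.elim (Matrix.vecMul y (ratMat C * (ratMat A)⁻¹)) y)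
      {y | Matrix.vecMul y
            (ratMat D + ratMat C * (ratMat A)⁻¹ * ratMat B) = 0}
      {v | Matrix.vecMul v
            (Matrix.fromBlocks (ratMat A) (ratMat B) (-(ratMat C))
              (ratMat D)) = 0} :=
  ⟨sumElim_vecMul_smul _, sumElim_vecMul_add _,
    bijOn_sumElim_vecMul_leftKernel (ratMat B) (ratMat C) (ratMat D) hA⟩
end

section
/- Let $L(\lambda) = \begin{bmatrix} A_1\lambda + A_0 & B_1\lambda + B_0 \\ -(C_1\lambda + C_0) & D_1\lambda + D_0 \end{bmatrix}$ be a linear polynomial system matrix with nonsingular state pencil $A_1\lambda + A_0 \in \mathbb{F}[\lambda]^{n\times n}$ and transfer function $T(\lambda) = D_1\lambda + D_0 + (C_1\lambda+C_0)(A_1\lambda+A_0)^{-1}(B_1\lambda+B_0)$. If $u(\lambda) = \begin{bmatrix} y(\lambda) \\ x(\lambda) \end{bmatrix}$ is a polynomial vector in the right nullspace of $L(\lambda)$, then $x(\lambda)$ lies in the right nullspace of $T(\lambda)$; moreover, if the constant matrix $\begin{bmatrix} A_1 \\ C_1 \end{bmatrix}$ has full column rank $n$, then $\deg u(\lambda)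 = \deg x(\lambda)$. -/
/-!
The nullspace statement is block elimination over `F(λ)`: the top block row gives
`A y = -B x`, hence `T x = D x + C A⁻¹ B x = D x - C y = 0` by the bottom block row.

For the degrees, suppose `deg y = k > deg x`. Then `x` has no coefficient of `λ^k` or
`λ^(k+1)` and `y` none of `λ^(k+1)`, so the coefficient of `λ^(k+1)` in `L u = 0` reads
`[A₁; C₁] y_k = 0`. Full column rank forces `y_k = 0`, contradicting that `y_k` is the
leading coefficient vector of `y`.
-/

open Matrix Polynomial

set_option synthInstance.maxHeartbeats 1000000
set_option maxHeartbeats 1000000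

/-- A matrix pencil `M₁ λ + M₀` as a polynomial matrix. -/
noncomputable def pencil {F : Type*} [Field F] {α β : Type*}
    (M₁ M₀ : Matrix α β F) : Matrix α β (Polynomial F) :=
  (Polynomial.X : Polynomial F) • M₁.map Polynomial.C + M₀.map Polynomial.C

section Pencil

variable {F : Type*} [Field F] {α β γ : Type*}

lemma coeff_pencil_mulVec_succ [Fintype β] (M₁ M₀ : Matrix α β F) (v : β → F[X]) (k : ℕ)
    (i : α) : ((pencil M₁ M₀ *ᵥ v) i).coeff (k + 1) =
      (M₁ *ᵥ fun j => (v j).coeff k) i + (M₀ *ᵥ fun j => (v j).coeff (k + 1)) i := by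
  simp only [pencil, mulVec, dotProduct, Matrix.add_apply, Matrix.smul_apply, map_apply,
    smul_eq_mul, add_mul, Finset.sum_add_distrib, coeff_add, finsetSum_coeff, mul_assoc,
    coeff_X_mul, coeff_C_mul]

lemma fromRows_pencil (M₁ M₀ : Matrix α γ F) (N₁ N₀ : Matrix β γ F) :
    fromRows (pencil M₁ M₀) (pencil N₁ N₀) = pencil (fromRows M₁ N₁) (fromRows M₀ N₀) := by
  ext (i | i) j <;> simp [pencil]

lemma neg_pencil (M₁ M₀ : Matrix α β F) : -pencil M₁ M₀ = pencil (-M₁) (-M₀) := by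
  rw [pencil, pencil, Matrix.map_neg _ (map_neg C), Matrix.map_neg _ (map_neg C), smul_neg,
    neg_add]

end Pencil

lemma Matrix.mulVec_injective_of_rank_eq_card {K m n : Type*} [Field K] [Fintype n]
    (A : Matrix m n K) (h : A.rank = Fintype.card n) : Function.Injective A.mulVec := by
  rw [Matrix.mulVec_injective_iff, linearIndependent_iff_card_eq_finrank_span, Set.finrank,
    ← rank_eq_finrank_span_cols, h]

lemma coeff_eq_zero_of_sup_degree_lt {R ι : Type*} [Semiring R] [Fintype ι] {v : ι → R[X]}
    {k : ℕ}
    (h : Finset.univ.sup (fun i => (v i).degree) < k) (i : ι) : (v i).coeff k = 0 :=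
  coeff_eq_zero_of_degree_lt ((Finset.le_sup (Finset.mem_univ i)).trans_lt h)

theorem sup_degree_le_of_pencil_mulVec_add_eq_zero {F α β γ : Type*} [Field F] [Fintype β]
    [Fintype γ] {M₁ M₀ : Matrix α β F} {N₁ N₀ : Matrix α γ F} (hM : Function.Injective M₁.mulVec)
    {y : β → F[X]} {x : γ → F[X]} (h : pencil M₁ M₀ *ᵥ y + pencil N₁ N₀ *ᵥ x = 0) :
    Finset.univ.sup (fun i => (y i).degree) ≤ Finset.univ.sup (fun j => (x j).degree) := by
  by_contra! hlt
  obtain ⟨i, -, -⟩ := Finset.lt_sup_iff.mp hlt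
  obtain ⟨i₀, -, hi₀⟩ := Finset.exists_mem_eq_sup _ ⟨i, Finset.mem_univ i⟩ fun i => (y i).degree
  obtain ⟨k, hk⟩ := WithBot.ne_bot_iff_exists.mp hlt.ne_bot
  rw [← hk] at hi₀ hlt
  have hy : ∀ j, (y j).coeff (k + 1) = 0 :=
    coeff_eq_zero_of_sup_degree_lt (hk ▸ WithBot.coe_lt_coe.mpr k.lt_succ_self)
  have hx : ∀ j, (x j).coeff k = 0 := coeff_eq_zero_of_sup_degree_lt hlt
  have hx' : ∀ j, (x j).coeff (k + 1) = 0 :=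
    coeff_eq_zero_of_sup_degree_lt (hlt.trans (WithBot.coe_lt_coe.mpr k.lt_succ_self))
  have hlead : (fun j => (y j).coeff k) = 0 := hM <| by
    funext i
    simpa [coeff_pencil_mulVec_succ, hy, hx, hx', ← Pi.zero_def] using
      congrArg (fun v => (v i).coeff (k + 1)) h
  exact coeff_ne_zero_of_eq_degree hi₀.symm (congrFun hlead i₀)

theorem mulVec_schur_eq_zero_of_fromBlocks_mulVec_eq_zero {K m p q : Type*} [CommRing K]
    [Fintype m] [DecidableEq m] [Fintype p] {A : Matrix m m K} {B : Matrix m p K}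
    {C : Matrix q m K} {D : Matrix q p K} (hA : IsUnit A.det) {y : m → K} {x : p → K}
    (h : fromBlocks A B (-C) D *ᵥ Sum.elim y x = 0) : (D + C * A⁻¹ * B) *ᵥ x = 0 := by
  rw [fromBlocks_mulVec, ← Sum.elim_zero_zero, Sum.elim_eq_iff] at h
  simp only [Sum.elim_comp_inl, Sum.elim_comp_inr, neg_mulVec] at h
  have hBx : B *ᵥ x = -(A *ᵥ y) := eq_neg_of_add_eq_zero_right h.1
  have hDx : D *ᵥ x = C *ᵥ y := (neg_add_eq_zero.mp h.2).symm
  rw [add_mulVec, ← mulVec_mulVec, ← mulVec_mulVec, hBx, mulVec_neg, mulVec_mulVec,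
    nonsing_inv_mul _ hA, one_mulVec, hDx, mulVec_neg, add_neg_cancel]

/-- For a linear polynomial system matrix `L = [A₁λ+A₀  B₁λ+B₀; -(C₁λ+C₀)  D₁λ+D₀]`
with nonsingular state pencil and transfer function `T`, any polynomial vector
`u = [y; x]` in the right nullspace of `L` has its bottom part `x` in the right
nullspace of `T`; moreover if `[A₁; C₁]` has full column rank `n`, then
`deg u = deg x`. -/
theorem rightNullspace_pencil_degree {F : Type*} [Field F] {n r' q' : ℕ}
    (A₁ A₀ : Matrix (Fin n) (Fin n) F) (B₁ B₀ : Matrix (Fin n) (Fin r') F)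
    (C₁ C₀ : Matrix (Fin q') (Fin n) F) (D₁ D₀ : Matrix (Fin q') (Fin r') F)
    (hA : IsUnit (ratMat (pencil A₁ A₀)).det)
    (y : Fin n → Polynomial F) (x : Fin r' → Polynomial F)
    (hu : (Matrix.fromBlocks (pencil A₁ A₀) (pencil B₁ B₀)
            (-(pencil C₁ C₀)) (pencil D₁ D₀)).mulVec (Sum.elim y x) = 0) :
    (ratMat (pencil D₁ D₀) + ratMat (pencil C₁ C₀) * (ratMat (pencil A₁ A₀))⁻¹
        * ratMat (pencil B₁ B₀)).mulVec
        (fun j => algebraMap (Polynomial F) (RatFunc F) (x j)) = 0 ∧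
    ((Matrix.fromRows A₁ C₁).rank = n →
      (Finset.univ.sup fun i : Fin n ⊕ Fin r' => ((Sum.elim y x) i).degree)
        = Finset.univ.sup fun j : Fin r' => (x j).degree) := by
  constructor
  · have hφ : ratMat (fromBlocks (pencil A₁ A₀) (pencil B₁ B₀) (-pencil C₁ C₀) (pencil D₁ D₀)) *ᵥ
        (algebraMap F[X] (RatFunc F) ∘ Sum.elim y x) = 0 := by
      funext i
      rw [ratMat, ← RingHom.map_mulVec, hu, Pi.zero_apply, map_zero, Pi.zero_apply]
    rw [ratMat, fromBlocks_map, Matrix.map_neg _ (map_neg _), Sum.comp_elim] at hφ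
    exact mulVec_schur_eq_zero_of_fromBlocks_mulVec_eq_zero hA hφ
  · intro hr
    -- negating the bottom block row puts `[A₁; C₁]` in front of `y`
    have hstack : pencil (fromRows A₁ C₁) (fromRows A₀ C₀) *ᵥ y +
        pencil (fromRows B₁ (-D₁)) (fromRows B₀ (-D₀)) *ᵥ x = 0 := by
      rw [fromBlocks_mulVec, ← Sum.elim_zero_zero, Sum.elim_eq_iff] at hu
      simp only [Sum.elim_comp_inl, Sum.elim_comp_inr, neg_mulVec] at hu
      rw [← fromRows_pencil, ← fromRows_pencil, ← neg_pencil, fromRows_mulVec, fromRows_mulVec,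
        ← Sum.elim_add_add, ← Sum.elim_zero_zero, Sum.elim_eq_iff, neg_mulVec]
      exact ⟨hu.1, add_neg_eq_zero.mpr (neg_add_eq_zero.mp hu.2)⟩
    have hdeg := sup_degree_le_of_pencil_mulVec_add_eq_zero
      ((fromRows A₁ C₁).mulVec_injective_of_rank_eq_card (by rwa [Fintype.card_fin])) hstack
    rw [← Finset.univ_disjSum_univ, Finset.sup_disjSum]
    simpa using hdeg
end

section
/- Let $L(\lambda) = \begin{bmatrix} A_1\lambda + A_0 & B_1\lambda + B_0 \\ -(C_1\lambda + C_0) & D_1\lambda + D_0 \end{bmatrix}$ be a linear polynomial system matrix with nonsingular state pencil $A_1\lambda+A_0$ and transfer function $T(\lambda)$. If $v(\lambda)^T = \begin{bmatrix} \tilde y(\lambda)^T & \tilde x(\lambda)^T \end{bmatrix}$ is a polynomial row vector in the left nullspace of $L(\lambda)$, then $\tilde x(\lambda)^T$ lies in the left nullspace of $T(\lambda)$; moreover, if the constant matrix $\begin{bmatrix} A_1 & B_1 \end{bmatrix}$ has full row rank $n$, then $\deg v(\lambda) = \deg \tilde x(\lambda)$. -/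
open Matrix Polynomial

set_option synthInstance.maxHeartbeats 1000000
set_option maxHeartbeats 1000000

/-!
Eliminating `ỹ` through the first block column, `ỹᵀ = x̃ᵀ (C₁λ+C₀)(A₁λ+A₀)⁻¹`, turns the second
block column of `vᵀ L = 0` into `x̃ᵀ T = 0`. For the degrees: if `d = deg ỹ` exceeded `deg x̃`,
the coefficient of `λ^(d+1)` in `vᵀ L = 0` would read `c [A₁ B₁] = 0` for the nonzero vector `c`
of `λ^d`-coefficients of `ỹ`, which full row rank forbids.
-/

section SystemMatrix

variable {R : Type*} {m p ι : Type*}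

def systemMatrix [Neg R] (A : Matrix m m R) (B : Matrix m ι R) (C : Matrix p m R)
    (D : Matrix p ι R) : Matrix (m ⊕ p) (m ⊕ ι) R :=
  fromBlocks A B (-C) D

noncomputable def transferFunction [CommRing R] [Fintype m] [DecidableEq m] (A : Matrix m m R)
    (B : Matrix m ι R) (C : Matrix p m R) (D : Matrix p ι R) : Matrix p ι R :=
  D + C * A⁻¹ * B

lemma systemMatrix_map {S : Type*} [Ring R] [Ring S] (f : R →+* S) (A : Matrix m m R)
    (B : Matrix m ι R) (C : Matrix p m R) (D : Matrix p ι R) :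
    (systemMatrix A B C D).map f = systemMatrix (A.map f) (B.map f) (C.map f) (D.map f) := by
  simp [systemMatrix, fromBlocks_map, Matrix.map_neg _ (map_neg f)]

lemma systemMatrix_pencil [Field R] (A₁ A₀ : Matrix m m R) (B₁ B₀ : Matrix m ι R)
    (C₁ C₀ : Matrix p m R) (D₁ D₀ : Matrix p ι R) :
    systemMatrix (pencil A₁ A₀) (pencil B₁ B₀) (pencil C₁ C₀) (pencil D₁ D₀) =
      pencil (systemMatrix A₁ B₁ C₁ D₁) (systemMatrix A₀ B₀ C₀ D₀) := by
  ext (i | i) (j | j) <;> simp [systemMatrix, pencil]; ring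

theorem vecMul_transferFunction_eq_zero [CommRing R] [Fintype m] [DecidableEq m] [Fintype p]
    {A : Matrix m m R} {B : Matrix m ι R} {C : Matrix p m R} {D : Matrix p ι R}
    (hA : IsUnit A.det) {y : m → R} {x : p → R}
    (h : Sum.elim y x ᵥ* systemMatrix A B C D = 0) :
    x ᵥ* transferFunction A B C D = 0 := by
  rw [systemMatrix, vecMul_fromBlocks, Sum.elim_comp_inl, Sum.elim_comp_inr] at h
  have hAC : y ᵥ* A = x ᵥ* C := by
    simpa [vecMul_neg, add_neg_eq_zero] using congrArg (· ∘ Sum.inl) h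
  have hBD : y ᵥ* B + x ᵥ* D = 0 := congrArg (· ∘ Sum.inr) h
  calc x ᵥ* transferFunction A B C D
      = x ᵥ* D + ((x ᵥ* C) ᵥ* A⁻¹) ᵥ* B := by
        rw [transferFunction, vecMul_add, ← vecMul_vecMul, ← vecMul_vecMul]
    _ = x ᵥ* D + y ᵥ* B := by rw [← hAC, vecMul_vecMul y A, mul_nonsing_inv _ hA, vecMul_one]
    _ = 0 := by rw [add_comm, hBD]

end SystemMatrix

section Pencil

variable {F : Type*} [Field F] {m p ι : Type*}

lemma pencil_fromRows (M₁ M₀ : Matrix m ι F) (N₁ N₀ : Matrix p ι F) :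
    pencil (fromRows M₁ N₁) (fromRows M₀ N₀) = fromRows (pencil M₁ M₀) (pencil N₁ N₀) := by
  ext (i | i) j <;> simp [pencil]

lemma coeff_vecMul_pencil [Fintype m] (M₁ M₀ : Matrix m ι F) (u : m → F[X]) (k : ℕ) (j : ι) :
    ((u ᵥ* pencil M₁ M₀) j).coeff (k + 1) =
      ((fun i => (u i).coeff k) ᵥ* M₁) j + ((fun i => (u i).coeff (k + 1)) ᵥ* M₀) j := by
  simp only [vecMul, dotProduct, pencil, Matrix.add_apply, Matrix.smul_apply, map_apply,
    smul_eq_mul, finsetSum_coeff, mul_add, coeff_add, ← mul_assoc, coeff_mul_C, coeff_mul_X,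
    Finset.sum_add_distrib]

end Pencil

section VecDegree

variable {R : Type*} [Semiring R] {m p : Type*} [Fintype m] [Fintype p]

def vecDegree (u : m → R[X]) : WithBot ℕ :=
  Finset.univ.sup fun i => (u i).degree

lemma degree_le_vecDegree (u : m → R[X]) (i : m) : (u i).degree ≤ vecDegree u :=
  Finset.le_sup (f := fun i => (u i).degree) (Finset.mem_univ i)

lemma vecDegree_sumElim (u : m → R[X]) (w : p → R[X]) :
    vecDegree (Sum.elim u w) = vecDegree u ⊔ vecDegree w := by
  rw [vecDegree, ← Finset.univ_disjSum_univ, Finset.sup_disjSum]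
  rfl

end VecDegree

lemma linearIndependent_row_of_rank_eq_card {K m n : Type*} [Field K] [Fintype m] [Fintype n]
    {M : Matrix m n K} (h : M.rank = Fintype.card m) : LinearIndependent K M.row := by
  rw [linearIndependent_iff_card_eq_finrank_span, Set.finrank, ← rank_eq_finrank_span_row, h]

theorem vecDegree_le_of_sumElim_vecMul_pencil_eq_zero {F : Type*} [Field F] {m p ι : Type*}
    [Fintype m] [Fintype p] {M₁ M₀ : Matrix m ι F} {N₁ N₀ : Matrix p ι F}
    (hM : LinearIndependent F M₁.row) {u : m → F[X]} {w : p → F[X]}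
    (h : Sum.elim u w ᵥ* pencil (fromRows M₁ N₁) (fromRows M₀ N₀) = 0) :
    vecDegree u ≤ vecDegree w := by
  rw [pencil_fromRows, sumElim_vecMul_fromRows] at h
  by_contra! hlt
  obtain ⟨d, hd⟩ : ∃ d : ℕ, vecDegree u = d :=
    (WithBot.ne_bot_iff_exists.mp (ne_bot_of_gt hlt)).imp fun _ => Eq.symm
  have hu : ∀ i, (u i).degree ≤ d := fun i => hd ▸ degree_le_vecDegree u i
  have hw : ∀ k, (w k).degree < d := fun k => hd ▸ (degree_le_vecDegree w k).trans_lt hlt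
  have hd_lt : (d : WithBot ℕ) < ↑(d + 1) := WithBot.coe_lt_coe.mpr d.lt_succ_self
  have hu₁ : (fun i => (u i).coeff (d + 1)) = 0 :=
    funext fun i => coeff_eq_zero_of_degree_lt ((hu i).trans_lt hd_lt)
  have hw₀ : (fun k => (w k).coeff d) = 0 := funext fun k => coeff_eq_zero_of_degree_lt (hw k)
  have hw₁ : (fun k => (w k).coeff (d + 1)) = 0 :=
    funext fun k => coeff_eq_zero_of_degree_lt ((hw k).trans hd_lt)
  -- the `λ^(d+1)` coefficient of `h`
  have hlead : (fun i => (u i).coeff d) ᵥ* M₁ = 0 := by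
    funext j
    simpa [coeff_vecMul_pencil, hu₁, hw₀, hw₁] using congrArg (fun v => (v j).coeff (d + 1)) h
  have hcoeff : ∀ i, (u i).coeff d = 0 :=
    congrFun (vecMul_injective_iff.mpr hM (hlead.trans (zero_vecMul M₁).symm))
  have : vecDegree u < d := (Finset.sup_lt_iff (WithBot.bot_lt_coe d)).mpr fun i _ =>
    (hu i).lt_of_ne fun hi => coeff_ne_zero_of_eq_degree hi (hcoeff i)
  exact this.ne hd

/-- For a linear polynomial system matrix `L = [A₁λ+A₀  B₁λ+B₀; -(C₁λ+C₀)  D₁λ+D₀]`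
with nonsingular state pencil and transfer function `T`, any polynomial row
vector `vᵀ = [ỹᵀ x̃ᵀ]` in the left nullspace of `L` has `x̃ᵀ` in the left
nullspace of `T`; moreover if `[A₁ B₁]` has full row rank `n`, then
`deg v = deg x̃`. -/
theorem leftNullspace_pencil_degree {F : Type*} [Field F] {n r' q' : ℕ}
    (A₁ A₀ : Matrix (Fin n) (Fin n) F) (B₁ B₀ : Matrix (Fin n) (Fin r') F)
    (C₁ C₀ : Matrix (Fin q') (Fin n) F) (D₁ D₀ : Matrix (Fin q') (Fin r') F)
    (hA : IsUnit (ratMat (pencil A₁ A₀)).det)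
    (ty : Fin n → Polynomial F) (tx : Fin q' → Polynomial F)
    (hv : Matrix.vecMul (Sum.elim ty tx)
            (Matrix.fromBlocks (pencil A₁ A₀) (pencil B₁ B₀)
              (-(pencil C₁ C₀)) (pencil D₁ D₀)) = 0) :
    Matrix.vecMul (fun j => algebraMap (Polynomial F) (RatFunc F) (tx j))
        (ratMat (pencil D₁ D₀) + ratMat (pencil C₁ C₀) * (ratMat (pencil A₁ A₀))⁻¹
          * ratMat (pencil B₁ B₀)) = 0 ∧
    ((Matrix.fromCols A₁ B₁).rank = n →
      (Finset.univ.sup fun i : Fin n ⊕ Fin q' => ((Sum.elim ty tx) i).degree)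
        = Finset.univ.sup fun j : Fin q' => (tx j).degree) := by
  have hL : Sum.elim ty tx ᵥ* systemMatrix (pencil A₁ A₀) (pencil B₁ B₀) (pencil C₁ C₀)
      (pencil D₁ D₀) = 0 := hv
  constructor
  · set φ := algebraMap (Polynomial F) (RatFunc F)
    refine vecMul_transferFunction_eq_zero (y := φ ∘ ty) (x := φ ∘ tx) hA ?_
    funext j
    rw [← Sum.comp_elim]
    unfold ratMat
    rw [← systemMatrix_map, ← RingHom.map_vecMul, hL]
    exact map_zero φ
  · intro hrank
    rw [systemMatrix_pencil, systemMatrix, systemMatrix, ← fromRows_fromCols_eq_fromBlocks,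
      ← fromRows_fromCols_eq_fromBlocks] at hL
    have hrows := linearIndependent_row_of_rank_eq_card (hrank.trans (Fintype.card_fin n).symm)
    exact (vecDegree_sumElim ty tx).trans
      (sup_eq_right.mpr (vecDegree_le_of_sumElim_vecMul_pencil_eq_zero hrows hL))
end

section
/- Let $R(\lambda)=D(\lambda)+C(\lambda)A(\lambda)^{-1}B(\lambda)$ with $A(\lambda)$ nonsingular. Let $L_A(\lambda)=\begin{bmatrix} M_A(\lambda)\\ K_A(\lambda)\end{bmatrix}$ be invertible over $\mathbb{F}(\lambda)$ with $L_A(\lambda)N_A(\lambda)^T = \begin{bmatrix} A(\lambda) \\ 0 \end{bmatrix}$ (so $M_A(\lambda)N_A(\lambda)^T = A(\lambda)$ and $K_A(\lambda)N_A(\lambda)^T = 0$), and let $M_C(\lambda), M_B(\lambda), M_D(\lambda), K_D(\lambda), N_D(\lambda)$ satisfy $M_C(\lambda)N_A(\lambda)^T = C(\lambda)$, $M_B(\lambda)N_D(\lambda)^T = B(\lambda)$, $M_D(\lambda)N_D(\lambda)^T = D(\lambda)$ and $K_D(\lambda)N_D(\lambda)^T = 0$. Then the transfer function $\widehat R(\lambda)$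 of $\mathcal{L}(\lambda) = \begin{bmatrix} M_A & M_B \\ K_A & 0 \\ -M_C & M_D \\ 0 & K_D \end{bmatrix}$ (with state matrix $L_A(\lambda)$) equals $\begin{bmatrix} M_D(\lambda)+C(\lambda)A(\lambda)^{-1}M_B(\lambda) \\ K_D(\lambda) \end{bmatrix}$, and satisfies $\widehat R(\lambda) N_D(\lambda)^T = \begin{bmatrix} R(\lambda) \\ 0 \end{bmatrix}$. -/
/-! The identity `L_A⁻¹ [I; 0] = N_Aᵀ A⁻¹`, which follows from `L_A N_Aᵀ = [A; 0]`, reduces the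
transfer function to its first block row; multiplying by `N_Dᵀ` then turns each `M_•` into the
matrix it represents. -/

open Matrix Polynomial

set_option synthInstance.maxHeartbeats 1000000
set_option maxHeartbeats 1000000

lemma ratMat_mul {F : Type*} [Field F] {α β γ : Type*} [Fintype β]
    (M : Matrix α β (Polynomial F)) (N : Matrix β γ (Polynomial F)) :
    ratMat (M * N) = ratMat M * ratMat N :=
  Matrix.map_mul

lemma ratMat_zero {F : Type*} [Field F] {α β : Type*} :
    ratMat (0 : Matrix α β (Polynomial F)) = 0 :=
  Matrix.map_zero _ (map_zero _)

lemma ratMat_fromRows {F : Type*} [Field F] {α₁ α₂ β : Type*}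
    (M : Matrix α₁ β (Polynomial F)) (N : Matrix α₂ β (Polynomial F)) :
    ratMat (fromRows M N) = fromRows (ratMat M) (ratMat N) :=
  fromRows_map M N _

namespace Matrix

variable {R : Type*} [CommRing R] {ι σ κ μ ν τ : Type*}

/-- The transfer function `V + U S⁻¹ T` of the polynomial system matrix `[S T; -U V]`. -/
noncomputable def transferFunction [Fintype σ] [DecidableEq σ] (S : Matrix σ σ R)
    (T : Matrix σ ν R) (U : Matrix μ σ R) (V : Matrix μ ν R) : Matrix μ ν R :=
  V + U * S⁻¹ * T

lemma fromRows_add_fromRows (X X' : Matrix μ ν R) (Y Y' : Matrix τ ν R) :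
    fromRows X Y + fromRows X' Y' = fromRows (X + X') (Y + Y') := by
  ext (i | i) j <;> rfl

variable [Fintype ι] [DecidableEq ι] [Fintype σ] [DecidableEq σ]
  {L : Matrix (ι ⊕ σ) (ι ⊕ σ) R} {A : Matrix ι ι R} {N : Matrix (ι ⊕ σ) ι R}

lemma inv_mul_fromRows_zero (hL : IsUnit L.det) (hA : IsUnit A.det)
    (hN : L * N = fromRows A 0) (X : Matrix ι κ R) :
    L⁻¹ * fromRows X (0 : Matrix σ κ R) = N * A⁻¹ * X := by
  have hX : fromRows X (0 : Matrix σ κ R) = L * (N * (A⁻¹ * X)) := by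
    rw [← Matrix.mul_assoc, hN, fromRows_mul, Matrix.zero_mul, mul_nonsing_inv_cancel_left _ _ hA]
  rw [hX, nonsing_inv_mul_cancel_left _ _ hL, Matrix.mul_assoc]

lemma transferFunction_fromRows (hL : IsUnit L.det) (hA : IsUnit A.det)
    (hN : L * N = fromRows A 0) {C : Matrix μ ι R} {MC : Matrix μ (ι ⊕ σ) R}
    (hC : MC * N = C) (MB : Matrix ι κ R) (MD : Matrix μ κ R) (KD : Matrix τ κ R) :
    transferFunction L (fromRows MB 0) (fromRows MC (0 : Matrix τ (ι ⊕ σ) R)) (fromRows MD KD)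
      = fromRows (MD + C * A⁻¹ * MB) KD := by
  rw [transferFunction, Matrix.mul_assoc, inv_mul_fromRows_zero hL hA hN, fromRows_mul,
    Matrix.zero_mul, ← Matrix.mul_assoc, ← Matrix.mul_assoc, hC, fromRows_add_fromRows,
    add_zero]

variable [Fintype κ]

lemma transferFunction_fromRows_mul (hL : IsUnit L.det) (hA : IsUnit A.det)
    (hN : L * N = fromRows A 0) {C : Matrix μ ι R} {MC : Matrix μ (ι ⊕ σ) R}
    (hC : MC * N = C) {B : Matrix ι ν R} {D : Matrix μ ν R} {ND : Matrix κ ν R}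
    {MB : Matrix ι κ R} {MD : Matrix μ κ R} {KD : Matrix τ κ R}
    (hB : MB * ND = B) (hD : MD * ND = D) (hKD : KD * ND = 0) :
    transferFunction L (fromRows MB 0) (fromRows MC (0 : Matrix τ (ι ⊕ σ) R))
        (fromRows MD KD) * ND
      = fromRows (D + C * A⁻¹ * B) 0 := by
  rw [transferFunction_fromRows hL hA hN hC, fromRows_mul, Matrix.add_mul, Matrix.mul_assoc,
    hB, hD, hKD]

end Matrix

theorem transferFunction_of_linearization_general {F : Type*} [Field F] {n m p : ℕ}
    {β δ κD : Type*} [Fintype β] [DecidableEq β] [Fintype κD]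
    (A : Matrix (Fin n) (Fin n) (Polynomial F))
    (B : Matrix (Fin n) (Fin m) (Polynomial F))
    (C : Matrix (Fin p) (Fin n) (Polynomial F))
    (D : Matrix (Fin p) (Fin m) (Polynomial F))
    (MA : Matrix (Fin n) (Fin n ⊕ β) (Polynomial F))
    (KA : Matrix β (Fin n ⊕ β) (Polynomial F))
    (NAt : Matrix (Fin n ⊕ β) (Fin n) (Polynomial F))
    (MD : Matrix (Fin p) κD (Polynomial F))
    (KD : Matrix δ κD (Polynomial F))
    (NDt : Matrix κD (Fin m) (Polynomial F))
    (MC : Matrix (Fin p) (Fin n ⊕ β) (Polynomial F))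
    (MB : Matrix (Fin n) κD (Polynomial F))
    (hA : IsUnit (ratMat A).det)
    (hLA : IsUnit (ratMat (Matrix.fromRows MA KA)).det)
    (hNA : Matrix.fromRows MA KA * NAt
            = Matrix.fromRows A (0 : Matrix β (Fin n) (Polynomial F)))
    (hC : MC * NAt = C)
    (hB : MB * NDt = B)
    (hD : MD * NDt = D)
    (hKD : KD * NDt = 0) :
    ratMat (Matrix.fromRows MD KD)
        + ratMat (Matrix.fromRows MC (0 : Matrix δ (Fin n ⊕ β) (Polynomial F)))
          * (ratMat (Matrix.fromRows MA KA))⁻¹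
          * ratMat (Matrix.fromRows MB (0 : Matrix β κD (Polynomial F)))
      = Matrix.fromRows
          (ratMat MD + ratMat C * (ratMat A)⁻¹ * ratMat MB) (ratMat KD) ∧
    (ratMat (Matrix.fromRows MD KD)
        + ratMat (Matrix.fromRows MC (0 : Matrix δ (Fin n ⊕ β) (Polynomial F)))
          * (ratMat (Matrix.fromRows MA KA))⁻¹
          * ratMat (Matrix.fromRows MB (0 : Matrix β κD (Polynomial F))))
        * ratMat NDt
      = Matrix.fromRows
          (ratMat D + ratMat C * (ratMat A)⁻¹ * ratMat B)
          (0 : Matrix δ (Fin m) (RatFunc F)) := by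
  have hN : ratMat (fromRows MA KA) * ratMat NAt = fromRows (ratMat A) 0 := by
    rw [← ratMat_mul, hNA, ratMat_fromRows, ratMat_zero]
  have hC' : ratMat MC * ratMat NAt = ratMat C := by rw [← ratMat_mul, hC]
  have hB' : ratMat MB * ratMat NDt = ratMat B := by rw [← ratMat_mul, hB]
  have hD' : ratMat MD * ratMat NDt = ratMat D := by rw [← ratMat_mul, hD]
  have hKD' : ratMat KD * ratMat NDt = 0 := by rw [← ratMat_mul, hKD, ratMat_zero]
  rw [ratMat_fromRows MD KD, ratMat_fromRows MC, ratMat_fromRows MB, ratMat_zero, ratMat_zero]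
  exact ⟨transferFunction_fromRows hLA hA hN hC' _ _ _,
    transferFunction_fromRows_mul hLA hA hN hC' hB' hD' hKD'⟩

/-- The transfer function `R̂` of the linear polynomial system matrix
`𝓛 = [[M_A, M_B], [K_A, 0], [-M_C, M_D], [0, K_D]]` with state matrix
`L_A = [M_A; K_A]` equals `[M_D + C A⁻¹ M_B; K_D]` and satisfies
`R̂ · N_Dᵀ = [R; 0]` where `R = D + C A⁻¹ B`. -/
theorem transferFunction_of_linearization {F : Type*} [Field F] {n m p : ℕ}
    {β δ κD : Type*} [Fintype β] [DecidableEq β] [Fintype δ] [Fintype κD]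
    (A : Matrix (Fin n) (Fin n) (Polynomial F))
    (B : Matrix (Fin n) (Fin m) (Polynomial F))
    (C : Matrix (Fin p) (Fin n) (Polynomial F))
    (D : Matrix (Fin p) (Fin m) (Polynomial F))
    (MA : Matrix (Fin n) (Fin n ⊕ β) (Polynomial F))
    (KA : Matrix β (Fin n ⊕ β) (Polynomial F))
    (NAt : Matrix (Fin n ⊕ β) (Fin n) (Polynomial F))
    (MD : Matrix (Fin p) κD (Polynomial F))
    (KD : Matrix δ κD (Polynomial F))
    (NDt : Matrix κD (Fin m) (Polynomial F))
    (MC : Matrix (Fin p) (Fin n ⊕ β) (Polynomial F))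
    (MB : Matrix (Fin n) κD (Polynomial F))
    (hA : IsUnit (ratMat A).det)
    (hLA : IsUnit (ratMat (Matrix.fromRows MA KA)).det)
    (hNA : Matrix.fromRows MA KA * NAt
            = Matrix.fromRows A (0 : Matrix β (Fin n) (Polynomial F)))
    (hC : MC * NAt = C)
    (hB : MB * NDt = B)
    (hD : MD * NDt = D)
    (hKD : KD * NDt = 0) :
    ratMat (Matrix.fromRows MD KD)
        + ratMat (Matrix.fromRows MC (0 : Matrix δ (Fin n ⊕ β) (Polynomial F)))
          * (ratMat (Matrix.fromRows MA KA))⁻¹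
          * ratMat (Matrix.fromRows MB (0 : Matrix β κD (Polynomial F)))
      = Matrix.fromRows
          (ratMat MD + ratMat C * (ratMat A)⁻¹ * ratMat MB) (ratMat KD) ∧
    (ratMat (Matrix.fromRows MD KD)
        + ratMat (Matrix.fromRows MC (0 : Matrix δ (Fin n ⊕ β) (Polynomial F)))
          * (ratMat (Matrix.fromRows MA KA))⁻¹
          * ratMat (Matrix.fromRows MB (0 : Matrix β κD (Polynomial F))))
        * ratMat NDt
      = Matrix.fromRows
          (ratMat D + ratMat C * (ratMat A)⁻¹ * ratMat B)
          (0 : Matrix δ (Fin m) (RatFunc F)) :=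
  transferFunction_of_linearization_general A B C D MA KA NAt MD KD NDt MC MB hA hLA hNA hC hB hD
    hKD
end

section
/- Under the setup of the previous statement (transfer function $\widehat R(\lambda) = \begin{bmatrix} M_R(\lambda) \\ K_D(\lambda) \end{bmatrix}$ with $M_R(\lambda) := M_D(\lambda)+C(\lambda)A(\lambda)^{-1}M_B(\lambda)$), suppose additionally there exist polynomial matrices $\widehat K_D(\lambda)$ and $\widehat N_D(\lambda)$ such that $\begin{bmatrix} K_D(\lambda) \\ \widehat K_D(\lambda) \end{bmatrix} \begin{bmatrix} \widehat N_D(\lambda)^T & N_D(\lambda)^T \end{bmatrix} = I$, i.e. $K_D\widehat N_D^T = I$, $K_D N_D^T = 0$, $\widehat K_D \widehat N_D^T = 0$, $\widehat K_D N_D^T = I_m$, and $\widehat N_D^T K_D + N_D^T \widehat K_D = I$. Then $\begin{bmatrix} I_p & -M_R(\lambda)\widehat N_D(\lambda)^T \end{bmatrix} \widehat R(\lambda) = R(\lambda)\,\widehat K_D(\lambda)$. -/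
/-! The identity is pure ring algebra: writing `M_R N̂_Dᵀ K_D = M_R (1 - N_Dᵀ K̂_D)`, the left-hand
side collapses to `M_R N_Dᵀ K̂_D`, and `M_R N_Dᵀ = D + C A⁻¹ B = R` because `N_Dᵀ` factors `D` and
`B` through `M_D` and `M_B`. -/

open Matrix Polynomial

set_option synthInstance.maxHeartbeats 1000000
set_option maxHeartbeats 1000000

section ratMat

variable {F : Type*} [Field F]

lemma ratMat_mul_s12 {a b c : Type*} [Fintype b]
    (X : Matrix a b (Polynomial F)) (Y : Matrix b c (Polynomial F)) :
    ratMat (X * Y) = ratMat X * ratMat Y := by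
  simp [ratMat, Matrix.map_mul]

lemma ratMat_add {a b : Type*} (X Y : Matrix a b (Polynomial F)) :
    ratMat (X + Y) = ratMat X + ratMat Y :=
  Matrix.map_add _ (map_add _) X Y

lemma ratMat_one {a : Type*} [DecidableEq a] :
    ratMat (1 : Matrix a a (Polynomial F)) = 1 :=
  Matrix.map_one _ (map_zero _) (map_one _)

end ratMat

theorem Matrix.fromCols_one_neg_mul_fromRows_of_add_eq_one {R : Type*} [Ring R]
    {p k d m : Type*} [Fintype p] [DecidableEq p] [Fintype k] [DecidableEq k] [Fintype d]
    [Fintype m] (M : Matrix p k R) {K : Matrix d k R} {N' : Matrix k d R}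
    {N : Matrix k m R} {K' : Matrix m k R} (h : N' * K + N * K' = 1) :
    fromCols (1 : Matrix p p R) (-(M * N')) * fromRows M K = M * N * K' := by
  rw [fromCols_mul_fromRows, Matrix.one_mul, Matrix.neg_mul, Matrix.mul_assoc, Matrix.mul_assoc,
    eq_sub_of_add_eq' h, Matrix.mul_sub, Matrix.mul_one, sub_eq_add_neg]

theorem left_sided_factorization_general {F : Type*} [Field F] {n m p : ℕ}
    {δ κD : Type*} [Fintype δ] [Fintype κD] [DecidableEq κD]
    (A : Matrix (Fin n) (Fin n) (Polynomial F))
    (B : Matrix (Fin n) (Fin m) (Polynomial F))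
    (C : Matrix (Fin p) (Fin n) (Polynomial F))
    (D : Matrix (Fin p) (Fin m) (Polynomial F))
    (MD : Matrix (Fin p) κD (Polynomial F))
    (MB : Matrix (Fin n) κD (Polynomial F))
    (KD : Matrix δ κD (Polynomial F))
    (KhatD : Matrix (Fin m) κD (Polynomial F))
    (NDt : Matrix κD (Fin m) (Polynomial F))
    (NhatDt : Matrix κD δ (Polynomial F))
    (hD : MD * NDt = D)
    (hB : MB * NDt = B)
    (h5 : NhatDt * KD + NDt * KhatD = 1) :
    Matrix.fromCols (1 : Matrix (Fin p) (Fin p) (RatFunc F))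
        (-((ratMat MD + ratMat C * (ratMat A)⁻¹ * ratMat MB) * ratMat NhatDt))
      * Matrix.fromRows
          (ratMat MD + ratMat C * (ratMat A)⁻¹ * ratMat MB) (ratMat KD)
      = (ratMat D + ratMat C * (ratMat A)⁻¹ * ratMat B) * ratMat KhatD := by
  have hR : (ratMat MD + ratMat C * (ratMat A)⁻¹ * ratMat MB) * ratMat NDt
      = ratMat D + ratMat C * (ratMat A)⁻¹ * ratMat B := by
    rw [Matrix.add_mul, Matrix.mul_assoc _ (ratMat MB), ← ratMat_mul_s12, ← ratMat_mul_s12, hD, hB]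
  have hdual : ratMat NhatDt * ratMat KD + ratMat NDt * ratMat KhatD = 1 := by
    rw [← ratMat_mul_s12, ← ratMat_mul_s12, ← ratMat_add, h5, ratMat_one]
  rw [← hR]
  exact fromCols_one_neg_mul_fromRows_of_add_eq_one _ hdual

/-- Left-sided factorization: with `R̂ = [M_R; K_D]`,
`M_R = M_D + C A⁻¹ M_B`, and dual bases satisfying
`[K_D; K̂_D]·[N̂_Dᵀ N_Dᵀ] = I`, one has
`[I_p  -M_R N̂_Dᵀ] · R̂ = R · K̂_D`. -/
theorem left_sided_factorization {F : Type*} [Field F] {n m p : ℕ}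
    {δ κD : Type*} [Fintype δ] [DecidableEq δ] [Fintype κD] [DecidableEq κD]
    (A : Matrix (Fin n) (Fin n) (Polynomial F))
    (B : Matrix (Fin n) (Fin m) (Polynomial F))
    (C : Matrix (Fin p) (Fin n) (Polynomial F))
    (D : Matrix (Fin p) (Fin m) (Polynomial F))
    (MD : Matrix (Fin p) κD (Polynomial F))
    (MB : Matrix (Fin n) κD (Polynomial F))
    (KD : Matrix δ κD (Polynomial F))
    (KhatD : Matrix (Fin m) κD (Polynomial F))
    (NDt : Matrix κD (Fin m) (Polynomial F))
    (NhatDt : Matrix κD δ (Polynomial F))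
    (hA : IsUnit (ratMat A).det)
    (hD : MD * NDt = D)
    (hB : MB * NDt = B)
    (h1 : KD * NhatDt = 1)
    (h2 : KD * NDt = 0)
    (h3 : KhatD * NhatDt = 0)
    (h4 : KhatD * NDt = 1)
    (h5 : NhatDt * KD + NDt * KhatD = 1) :
    Matrix.fromCols (1 : Matrix (Fin p) (Fin p) (RatFunc F))
        (-((ratMat MD + ratMat C * (ratMat A)⁻¹ * ratMat MB) * ratMat NhatDt))
      * Matrix.fromRows
          (ratMat MD + ratMat C * (ratMat A)⁻¹ * ratMat MB) (ratMat KD)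
      = (ratMat D + ratMat C * (ratMat A)⁻¹ * ratMat B) * ratMat KhatD :=
  left_sided_factorization_general A B C D MD MB KD KhatD NDt NhatDt hD hB h5
end

section
/- Let $K_d(\lambda)$ be the $(m-1)\times m$ linear polynomial matrix whose $i$-th row, for $1\leq i \leq m-2$, has entries $-\tfrac{1}{2}, \lambda, -\tfrac{1}{2}$ in columns $i, i+1, i+2$ (zeros elsewhere), and whose last row has entries $-1, \lambda$ in columns $m-1, m$. Let $N_d(\lambda)^T = \begin{bmatrix} \phi_{m-1}(\lambda) & \phi_{m-2}(\lambda) & \cdots & \phi_1(\lambda) & \phi_0(\lambda) \end{bmatrix}^T$ where $\phi_j$ are Chebyshev polynomials of the first kind. Then $K_d(\lambda)N_d(\lambda)^T = 0$, and for every $\lambda_0$, the constant matrix $K_d(\lambda_0)$ has full row rank $m-1$. -/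
/-!
Applied to `N_d`, an interior row of `K_d(λ)` gives `-(φ_{n+2} - 2λφ_{n+1} + φ_n)/2`, which
vanishes by the Chebyshev recurrence, and the last row gives `-φ₁ + λφ₀ = 0`. For the rank,
the first `m - 1` columns of `K_d(λ₀)` form an upper triangular matrix whose diagonal entries
`-1/2` and `-1` are nonzero.
-/

open Matrix Polynomial

/-- The Chebyshev pencil `K_d(λ)`: row `i` (for `i ≤ m-3`) has entries
`-1/2, λ, -1/2` in columns `i, i+1, i+2`; the last row (`i = m-2`) has entries
`-1, λ` in columns `m-2, m-1`. -/
noncomputable def chebK (F : Type*) [Field F] (m : ℕ) :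
    Matrix (Fin (m - 1)) (Fin m) (Polynomial F) :=
  Matrix.of fun i j =>
    if (j : ℕ) = (i : ℕ) then
      (if (i : ℕ) = m - 2 then -1 else Polynomial.C (-(2 : F)⁻¹))
    else if (j : ℕ) = (i : ℕ) + 1 then Polynomial.X
    else if (j : ℕ) = (i : ℕ) + 2 then Polynomial.C (-(2 : F)⁻¹)
    else 0

theorem Matrix.rank_eq_card_of_isUpperTriangular_submatrix {F ι κ : Type*} [Field F]
    [Fintype ι] [LinearOrder ι] [Fintype κ] (A : Matrix ι κ F) (c : ι → κ)
    (htri : (A.submatrix id c).IsUpperTriangular) (hdiag : ∀ i, A i (c i) ≠ 0) :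
    A.rank = Fintype.card ι := by
  refine le_antisymm A.rank_le_card_height ?_
  have hdet : (A.submatrix id c).det ≠ 0 := by
    rw [det_of_isUpperTriangular htri]
    exact Finset.prod_ne_zero_iff.2 fun i _ => hdiag i
  calc Fintype.card ι = (A.submatrix id c).rank :=
        (rank_of_isUnit _ ((isUnit_iff_isUnit_det _).2 hdet.isUnit)).symm
    _ ≤ A.rank := rank_submatrix_le A id c

section chebK

variable {F : Type*} [Field F] {m : ℕ}

theorem chebK_mulVec_apply (v : ℕ → F[X]) (i : Fin (m - 1)) :
    (chebK F m *ᵥ fun j => v j) i =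
      if (i : ℕ) = m - 2 then -v i + X * v (i + 1)
      else C (-(2 : F)⁻¹) * v i + X * v (i + 1) + C (-(2 : F)⁻¹) * v (i + 2) := by
  have hi : (i : ℕ) < m - 1 := i.2
  set a : F[X] := if (i : ℕ) = m - 2 then -1 else C (-(2 : F)⁻¹)
  have hsplit : ∀ j : ℕ, (if j = i then a else if j = i + 1 then X
      else if j = i + 2 then C (-(2 : F)⁻¹) else 0) * v j =
      ((if j = i then a * v j else 0) + (if j = i + 1 then X * v j else 0)) +
        (if j = i + 2 then C (-(2 : F)⁻¹) * v j else 0) := by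
    intro j
    split_ifs <;> first | omega | ring
  simp only [mulVec, dotProduct, chebK, of_apply]
  rw [Fin.sum_univ_eq_sum_range (fun j => (if j = i then a else if j = i + 1 then X
      else if j = i + 2 then C (-(2 : F)⁻¹) else 0) * v j)]
  simp only [hsplit, Finset.sum_add_distrib, Finset.sum_ite_eq', Finset.mem_range]
  by_cases hlast : (i : ℕ) = m - 2
  · simp [a, hlast, show m - 2 < m by omega, show m - 2 + 1 < m by omega,
      show ¬ m - 2 + 2 < m by omega]
  · simp [a, hlast, show (i : ℕ) < m by omega, show (i : ℕ) + 1 < m by omega,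
      show (i : ℕ) + 2 < m by omega]

theorem C_neg_inv_two_mul_two (h2 : (2 : F) ≠ 0) : C (-(2 : F)⁻¹) * 2 = -1 := by
  rw [← map_ofNat C 2, ← C_mul, neg_mul, inv_mul_cancel₀ h2, C_neg, C_1]

theorem chebK_mulVec_chebyshev_T (h2 : (2 : F) ≠ 0) :
    (chebK F m *ᵥ fun j : Fin m => Chebyshev.T F ((m : ℤ) - 1 - (j : ℕ))) = 0 := by
  funext i
  have hi : (i : ℕ) < m - 1 := i.2
  rw [chebK_mulVec_apply (fun j : ℕ => Chebyshev.T F ((m : ℤ) - 1 - j)), Pi.zero_apply]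
  split_ifs with hlast
  · have h1 : (m : ℤ) - 1 - (i : ℕ) = 1 := by omega
    have h0 : (m : ℤ) - 1 - ((i + 1 : ℕ) : ℤ) = 0 := by omega
    rw [h1, h0, Chebyshev.T_one, Chebyshev.T_zero]
    ring
  · obtain ⟨n, hn⟩ : ∃ n : ℤ, n = m - 3 - (i : ℕ) := ⟨_, rfl⟩
    have e0 : (m : ℤ) - 1 - (i : ℕ) = n + 2 := by omega
    have e1 : (m : ℤ) - 1 - ((i + 1 : ℕ) : ℤ) = n + 1 := by omega
    have e2 : (m : ℤ) - 1 - ((i + 2 : ℕ) : ℤ) = n := by omega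
    rw [e0, e1, e2, Chebyshev.T_add_two]
    linear_combination (X * Chebyshev.T F (n + 1)) * C_neg_inv_two_mul_two h2

theorem chebK_eval_isUpperTriangular (lam0 : F) :
    (((chebK F m).map (eval lam0)).submatrix id
      (Fin.castLE (Nat.sub_le m 1))).IsUpperTriangular := by
  intro i j hji
  have hji : (j : ℕ) < i := hji
  simp only [submatrix_apply, id, map_apply, chebK, of_apply, Fin.val_castLE]
  rw [if_neg (by omega), if_neg (by omega), if_neg (by omega), eval_zero]

theorem chebK_eval_diag_ne_zero (h2 : (2 : F) ≠ 0) (lam0 : F) (i : Fin (m - 1)) :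
    ((chebK F m).map (eval lam0)) i (Fin.castLE (Nat.sub_le m 1) i) ≠ 0 := by
  simp only [map_apply, chebK, of_apply, Fin.val_castLE, if_true]
  split_ifs <;> simp [h2]

theorem rank_chebK_eval (h2 : (2 : F) ≠ 0) (lam0 : F) :
    ((chebK F m).map (eval lam0)).rank = m - 1 := by
  rw [rank_eq_card_of_isUpperTriangular_submatrix _ _ (chebK_eval_isUpperTriangular lam0)
    (chebK_eval_diag_ne_zero h2 lam0), Fintype.card_fin]

end chebK

theorem chebyshev_pencil_dual_basis_general {F : Type*} [Field F] (h2 : (2 : F) ≠ 0)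
    {m : ℕ} :
    (chebK F m).mulVec
        (fun j : Fin m => Polynomial.Chebyshev.T F ((m : ℤ) - 1 - (j : ℕ))) = 0 ∧
    (∀ lam0 : F, ((chebK F m).map (Polynomial.eval lam0)).rank = m - 1) :=
  ⟨chebK_mulVec_chebyshev_T h2, rank_chebK_eval h2⟩

/-- `K_d(λ) N_d(λ)ᵀ = 0` for `N_d(λ)ᵀ = [φ_{m-1}, …, φ₁, φ₀]ᵀ` in the
Chebyshev basis, and every evaluation `K_d(λ₀)` has full row rank `m - 1`. -/
theorem chebyshev_pencil_dual_basis {F : Type*} [Field F] (h2 : (2 : F) ≠ 0)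
    {m : ℕ} (hm : 2 ≤ m) :
    (chebK F m).mulVec
        (fun j : Fin m => Polynomial.Chebyshev.T F ((m : ℤ) - 1 - (j : ℕ))) = 0 ∧
    (∀ lam0 : F, ((chebK F m).map (Polynomial.eval lam0)).rank = m - 1) :=
  chebyshev_pencil_dual_basis_general h2
end
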